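/- arXiv:1902.05549 — 5 statements merged into one kernel-verified Lean document; each statement's English description precedes it below -/
import Mathlib

section
/- For all real numbers a ≥ 0, b ≥ 0 and c > 0, one has 0 ≤ 1/(a+b+c) - 1/(a+c) - 1/(b+c) + 1/c ≤ √(a·b)/(2c²). -/
/-! The expression is the mixed second difference of `x ↦ 1 / (x + c)`, which equals
`a b (a + b + 2c) / (c (a + c) (b + c) (a + b + c))`; this is manifestly nonnegative. For the upper
bound, `(a + b + 2c) / (a + b + c) ≤ 2` and AM-GM in the form `4 c √(ab) ≤ (a + c) (b + c)`. -/

theorem one_div_add_add_sub_one_div_add_sub_one_div_add_add_one_div {a b c : ℝ} (hc : c ≠ 0)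
    (hac : a + c ≠ 0) (hbc : b + c ≠ 0) (habc : a + b + c ≠ 0) :
    1 / (a + b + c) - 1 / (a + c) - 1 / (b + c) + 1 / c
      = a * b * (a + b + 2 * c) / (c * (a + c) * (b + c) * (a + b + c)) := by
  field_simp
  ring

theorem four_mul_mul_sqrt_mul_le_add_mul_add {a b c : ℝ} (ha : 0 ≤ a) (hb : 0 ≤ b) (hc : 0 ≤ c) :
    4 * c * √(a * b) ≤ (a + c) * (b + c) := by
  have hsq : √(a * b) ^ 2 = a * b := Real.sq_sqrt (mul_nonneg ha hb)
  have hamgm : 2 * √(a * b) ≤ a + b := by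
    rw [Real.sqrt_mul ha]
    nlinarith [sq_nonneg (√a - √b), Real.sq_sqrt ha, Real.sq_sqrt hb]
  -- `(a + c) (b + c) - 4 c √(ab) = (√(ab) - c)² + c (a + b - 2 √(ab))`
  nlinarith [sq_nonneg (√(a * b) - c), mul_nonneg hc (sub_nonneg.2 hamgm)]

theorem mul_mul_add_div_le_sqrt_mul_div {a b c : ℝ} (ha : 0 ≤ a) (hb : 0 ≤ b) (hc : 0 < c) :
    a * b * (a + b + 2 * c) / (c * (a + c) * (b + c) * (a + b + c)) ≤ √(a * b) / (2 * c ^ 2) := by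
  have hsq : √(a * b) * √(a * b) = a * b := Real.mul_self_sqrt (mul_nonneg ha hb)
  rw [div_le_div_iff₀ (by positivity) (by positivity)]
  calc a * b * (a + b + 2 * c) * (2 * c ^ 2)
      = √(a * b) * c * ((2 * c * √(a * b)) * (a + b + 2 * c)) := by
        linear_combination (-(a + b + 2 * c) * 2 * c ^ 2) * hsq
    _ ≤ √(a * b) * c * ((2 * c * √(a * b)) * (2 * (a + b + c))) := by gcongr; linarith
    _ = √(a * b) * c * ((4 * c * √(a * b)) * (a + b + c)) := by ring
    _ ≤ √(a * b) * c * (((a + c) * (b + c)) * (a + b + c)) := by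
        gcongr √(a * b) * c * (?_ * _); exact four_mul_mul_sqrt_mul_le_add_mul_add ha hb hc.le
    _ = √(a * b) * (c * (a + c) * (b + c) * (a + b + c)) := by ring

theorem elementary_inequality (a b c : ℝ) (ha : 0 ≤ a) (hb : 0 ≤ b) (hc : 0 < c) :
    0 ≤ 1 / (a + b + c) - 1 / (a + c) - 1 / (b + c) + 1 / c ∧
    1 / (a + b + c) - 1 / (a + c) - 1 / (b + c) + 1 / c ≤ Real.sqrt (a * b) / (2 * c ^ 2) := by
  rw [one_div_add_add_sub_one_div_add_sub_one_div_add_add_one_div hc.ne' (by positivity)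
    (by positivity) (by positivity)]
  exact ⟨by positivity, mul_mul_add_div_le_sqrt_mul_div ha hb hc⟩
end

section
/- Let λ ∈ L²(ℝᵈ), ω : ℝᵈ → [0,∞) measurable, c > 0, and define Ψ₂(k₁,k₂) = 1/(ω(k₁)+ω(k₂)+c) - 1/(ω(k₁)+c) - 1/(ω(k₂)+c) + 1/c. Then for every ψ ∈ L²(ℝᵈ) with ∫ ω(k)|ψ(k)|² dk < ∞, one has |∫∫ conj(λ(k₁))λ(k₂) Ψ₂(k₁,k₂) ψ(k₂) conj(ψ(k₁)) dk₁ dk₂| ≤ (‖λ‖²/(2c²)) · ∫ ω(k)|ψ(k)|² dk. -/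
/-!
With a = ω k₁ and b = ω k₂ one has Ψ₂ = ab(a + b + 2c) / (c(a + c)(b + c)(a + b + c)), and AM–GM
bounds this by √a √b / (2c²). The integrand is therefore dominated by G(k₁) G(k₂) / (2c²) with
G = |λ| √(ω |ψ|²), so the double integral is at most (∫ G)² / (2c²), and Cauchy–Schwarz gives
(∫ G)² ≤ ‖λ‖² ∫ ω |ψ|².
-/

open MeasureTheory

lemma abs_one_div_mixed_difference_le {a b c : ℝ} (ha : 0 ≤ a) (hb : 0 ≤ b) (hc : 0 < c) :
    |1 / (a + b + c) - 1 / (a + c) - 1 / (b + c) + 1 / c| ≤ √a * √b / (2 * c ^ 2) := by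
  set u := √a * √b
  have hu : u ^ 2 = a * b := by rw [mul_pow, Real.sq_sqrt ha, Real.sq_sqrt hb]
  have hu_le : 2 * u ≤ a + b := by
    nlinarith [sq_nonneg (√a - √b), Real.sq_sqrt ha, Real.sq_sqrt hb]
  -- (a + c)(b + c) ≥ (u + c)² ≥ 4cu
  have h4cu : 4 * c * u ≤ (a + c) * (b + c) := by nlinarith [sq_nonneg (u - c)]
  have hE : 1 / (a + b + c) - 1 / (a + c) - 1 / (b + c) + 1 / c
      = a * b * (a + b + 2 * c) / (c * (a + c) * (b + c) * (a + b + c)) := by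
    field_simp
    ring
  rw [hE, abs_of_nonneg (by positivity), div_le_div_iff₀ (by positivity) (by positivity), ← hu]
  calc u ^ 2 * (a + b + 2 * c) * (2 * c ^ 2) = u * c * (4 * c * u) * ((a + b + 2 * c) / 2) := by
        ring
    _ ≤ u * c * ((a + c) * (b + c)) * (a + b + c) := by gcongr; linarith
    _ = u * (c * (a + c) * (b + c) * (a + b + c)) := by ring

section Integrals

variable {α β : Type*} [MeasurableSpace α] [MeasurableSpace β] {μ : Measure α} {ν : Measure β}

lemma MeasureTheory.Integrable.memLp_two_sqrt {f : α → ℝ} (hf : Integrable f μ) :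
    MemLp (fun a => √(f a)) 2 μ := by
  refine (memLp_two_iff_integrable_sq (Real.continuous_sqrt.comp_aestronglyMeasurable hf.1)).2 ?_
  simpa only [Real.sq_sqrt'] using hf.pos_part

lemma sq_integral_norm_mul_norm_le {E F : Type*} [NormedAddCommGroup E] [NormedAddCommGroup F]
    {f : α → E} {g : α → F} (hf : MemLp f 2 μ) (hg : MemLp g 2 μ) :
    (∫ a, ‖f a‖ * ‖g a‖ ∂μ) ^ 2 ≤ (∫ a, ‖f a‖ ^ 2 ∂μ) * ∫ a, ‖g a‖ ^ 2 ∂μ := by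
  have h := integral_mul_norm_le_Lp_mul_Lq Real.HolderConjugate.two_two
    (by simpa using hf.norm) (by simpa using hg.norm)
  simp only [norm_norm, Real.rpow_two, ← Real.sqrt_eq_rpow] at h
  calc (∫ a, ‖f a‖ * ‖g a‖ ∂μ) ^ 2
      ≤ (√(∫ a, ‖f a‖ ^ 2 ∂μ) * √(∫ a, ‖g a‖ ^ 2 ∂μ)) ^ 2 := by gcongr
    _ = (∫ a, ‖f a‖ ^ 2 ∂μ) * ∫ a, ‖g a‖ ^ 2 ∂μ := by
        rw [mul_pow, Real.sq_sqrt (integral_nonneg fun a => by positivity),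
          Real.sq_sqrt (integral_nonneg fun a => by positivity)]

lemma norm_integral_integral_le_of_norm_le_mul {E : Type*} [NormedAddCommGroup E]
    [NormedSpace ℝ E] {F : α → β → E} {G : α → ℝ} {H : β → ℝ} (hG : Integrable G μ)
    (hH : Integrable H ν) (hF : ∀ x y, ‖F x y‖ ≤ G x * H y) :
    ‖∫ x, ∫ y, F x y ∂ν ∂μ‖ ≤ (∫ x, G x ∂μ) * ∫ y, H y ∂ν := by
  rw [← integral_mul_const]
  refine norm_integral_le_of_norm_le (hG.mul_const _) (.of_forall fun x => ?_)
  rw [← integral_const_mul]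
  exact norm_integral_le_of_norm_le (hH.const_mul _) (.of_forall (hF x))

end Integrals

theorem K2_quadratic_form_bound_general {d : ℕ} (c : ℝ) (hc : 0 < c)
    (lam : (Fin d → ℝ) → ℂ) (hlam : MemLp lam 2 volume)
    (ω : (Fin d → ℝ) → ℝ) (hω0 : ∀ k, 0 ≤ ω k)
    (Ψ₂ : (Fin d → ℝ) → (Fin d → ℝ) → ℝ)
    (hΨ₂ : ∀ k₁ k₂, Ψ₂ k₁ k₂ =
      1 / (ω k₁ + ω k₂ + c) - 1 / (ω k₁ + c) - 1 / (ω k₂ + c) + 1 / c)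
    (ψ : (Fin d → ℝ) → ℂ)
    (hωψ : Integrable (fun k => ω k * ‖ψ k‖ ^ 2) volume) :
    ‖∫ k₁, ∫ k₂, (starRingEnd ℂ) (lam k₁) * lam k₂ * (Ψ₂ k₁ k₂ : ℂ)
        * ψ k₂ * (starRingEnd ℂ) (ψ k₁)‖
      ≤ (∫ q, ‖lam q‖ ^ 2) / (2 * c ^ 2) * ∫ k, ω k * ‖ψ k‖ ^ 2 := by
  let g : (Fin d → ℝ) → ℝ := fun k => √(ω k * ‖ψ k‖ ^ 2)
  have hg : MemLp g 2 volume := hωψ.memLp_two_sqrt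
  have hg_eq : ∀ k, g k = √(ω k) * ‖ψ k‖ := fun k =>
    (Real.sqrt_mul (hω0 k) _).trans (by rw [Real.sqrt_sq (norm_nonneg _)])
  have hG : Integrable (fun k => ‖lam k‖ * ‖g k‖) volume := hlam.norm.integrable_mul hg.norm
  have hpt : ∀ k₁ k₂, ‖(starRingEnd ℂ) (lam k₁) * lam k₂ * (Ψ₂ k₁ k₂ : ℂ)
      * ψ k₂ * (starRingEnd ℂ) (ψ k₁)‖ ≤ ‖lam k₁‖ * ‖g k₁‖ / (2 * c ^ 2) * (‖lam k₂‖ * ‖g k₂‖) := by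
    intro k₁ k₂
    have hΨ := hΨ₂ k₁ k₂ ▸ abs_one_div_mixed_difference_le (hω0 k₁) (hω0 k₂) hc
    simp only [norm_mul, Complex.norm_conj, Complex.norm_real, Real.norm_eq_abs, hg_eq, abs_norm,
      abs_of_nonneg (Real.sqrt_nonneg _)]
    calc ‖lam k₁‖ * ‖lam k₂‖ * |Ψ₂ k₁ k₂| * ‖ψ k₂‖ * ‖ψ k₁‖
        ≤ ‖lam k₁‖ * ‖lam k₂‖ * (√(ω k₁) * √(ω k₂) / (2 * c ^ 2)) * ‖ψ k₂‖ * ‖ψ k₁‖ := by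
          gcongr
      _ = _ := by ring
  calc _ ≤ (∫ k, ‖lam k‖ * ‖g k‖ / (2 * c ^ 2)) * ∫ k, ‖lam k‖ * ‖g k‖ :=
        norm_integral_integral_le_of_norm_le_mul (hG.div_const _) hG hpt
    _ = (∫ k, ‖lam k‖ * ‖g k‖) ^ 2 / (2 * c ^ 2) := by rw [integral_div]; ring
    _ ≤ (∫ k, ‖lam k‖ ^ 2) * (∫ k, ‖g k‖ ^ 2) / (2 * c ^ 2) := by
        gcongr
        exact sq_integral_norm_mul_norm_le hlam hg
    _ = _ := by
        simp only [g, Real.norm_eq_abs, sq_abs, Real.sq_sqrt (mul_nonneg (hω0 _) (sq_nonneg _))]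
        ring

/-- Cauchy–Schwarz bound on the quadratic form of the integral operator K₂. -/
theorem K2_quadratic_form_bound {d : ℕ} (c : ℝ) (hc : 0 < c)
    (lam : (Fin d → ℝ) → ℂ) (hlam : MemLp lam 2 volume)
    (ω : (Fin d → ℝ) → ℝ) (hω : Measurable ω) (hω0 : ∀ k, 0 ≤ ω k)
    (Ψ₂ : (Fin d → ℝ) → (Fin d → ℝ) → ℝ)
    (hΨ₂ : ∀ k₁ k₂, Ψ₂ k₁ k₂ =
      1 / (ω k₁ + ω k₂ + c) - 1 / (ω k₁ + c) - 1 / (ω k₂ + c) + 1 / c)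
    (ψ : (Fin d → ℝ) → ℂ) (hψ : MemLp ψ 2 volume)
    (hωψ : Integrable (fun k => ω k * ‖ψ k‖ ^ 2) volume) :
    ‖∫ k₁, ∫ k₂, (starRingEnd ℂ) (lam k₁) * lam k₂ * (Ψ₂ k₁ k₂ : ℂ)
        * ψ k₂ * (starRingEnd ℂ) (ψ k₁)‖
      ≤ (∫ q, ‖lam q‖ ^ 2) / (2 * c ^ 2) * ∫ k, ω k * ‖ψ k‖ ^ 2 :=
  K2_quadratic_form_bound_general c hc lam hlam ω hω0 Ψ₂ hΨ₂ ψ hωψ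
end

section
/- Let λ ∈ L²(ℝᵈ) with ‖λ‖ > 0, ω : ℝᵈ → [0,∞) measurable, ε > 0, σ ∈ {+1,-1}, and for large α > 0 let E(α) be the unique zero in (-∞, σε) of Φ_α(z) = -σε - z - α² ∫ |λ(q)|²/(ω(q)+σε-z) dq. Then E(α) = -‖λ‖α + o(α) as α → +∞. -/
open MeasureTheory Filter Asymptotics

/-!
Put `t = σε - E(α) > 0` and `I(t) = ∫ |λ|² / (ω + t)`, so that the defining equation reads
`t - 2σε = α² I(t)`. Since `t I(t) ≤ ‖λ‖²`, this gives `(t - σε)² ≤ ‖λ‖² α² + ε²`, i.e.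
`E(α) ≥ -‖λ‖α - ε`. Conversely, for `b < ‖λ‖` choose `M` with `∫_{ω ≤ M} |λ|² ≥ b²`; then
`(M + t) I(t) ≥ b²`, whence `t ≥ bα - M - 2ε` and `E(α) ≤ -bα + M + 3ε`. Letting `b ↑ ‖λ‖`
gives `E(α) = -‖λ‖α + o(α)`.
-/

theorem isLittleO_atTop_id_of_forall_norm_le {E : Type*} [Norm E] {f : ℝ → E}
    (h : ∀ δ > 0, ∃ C, ∀ᶠ x in atTop, ‖f x‖ ≤ δ * x + C) : f =o[atTop] fun x => x := by
  refine isLittleO_iff.2 fun c hc => ?_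
  obtain ⟨C, hC⟩ := h (c / 2) (half_pos hc)
  filter_upwards [hC, eventually_ge_atTop (2 * C / c), eventually_ge_atTop 0] with x hfx hCx hx
  rw [div_le_iff₀ hc] at hCx
  rw [Real.norm_of_nonneg hx]
  linarith

theorem sub_le_add_of_mul_sub_two_mul_le {a t x ε : ℝ} (ha : |a| ≤ ε) (hx : 0 ≤ x)
    (h : t * (t - 2 * a) ≤ x ^ 2) : t - a ≤ x + ε := by
  have hε : 0 ≤ ε := (abs_nonneg a).trans ha
  have ha2 : a ^ 2 ≤ ε ^ 2 := sq_le_sq' (abs_le.1 ha).1 (abs_le.1 ha).2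
  refine le_of_sq_le_sq ?_ (by positivity)
  nlinarith

theorem le_add_add_of_sq_le_mul {a t M y ε : ℝ} (ha : |a| ≤ ε) (ht : 0 ≤ t) (hM : 0 ≤ M)
    (h : y ^ 2 ≤ (t - 2 * a) * (M + t)) : y ≤ t + M + 2 * ε := by
  obtain ⟨ha₁, ha₂⟩ := abs_le.1 ha
  refine le_of_sq_le_sq (h.trans ?_) (by linarith)
  nlinarith [mul_le_mul_of_nonneg_right (show t - 2 * a ≤ t + M + 2 * ε by linarith)
    (show 0 ≤ M + t by linarith)]

section ResolventIntegral

variable {X : Type*} [MeasurableSpace X] {μ : Measure X} {g ω : X → ℝ}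

theorem integrable_div_add (hg : Integrable g μ) (hω : Measurable ω) (hω0 : ∀ x, 0 ≤ ω x)
    {t : ℝ} (ht : 0 < t) : Integrable (fun x => g x / (ω x + t)) μ := by
  refine (hg.norm.div_const t).mono'
    (hg.aemeasurable.div (hω.add_const t).aemeasurable).aestronglyMeasurable
    (Eventually.of_forall fun x => ?_)
  rw [norm_div, Real.norm_of_nonneg (show 0 ≤ ω x + t by linarith [hω0 x])]
  exact div_le_div_of_nonneg_left (norm_nonneg _) ht (by linarith [hω0 x])

theorem mul_integral_div_add_le (hg0 : ∀ x, 0 ≤ g x) (hg : Integrable g μ)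
    (hω0 : ∀ x, 0 ≤ ω x) {t : ℝ} (ht : 0 < t) : t * ∫ x, g x / (ω x + t) ∂μ ≤ ∫ x, g x ∂μ := by
  rw [← integral_const_mul]
  refine integral_mono_of_nonneg (Eventually.of_forall fun x => ?_) hg
    (Eventually.of_forall fun x => ?_)
  · have := hω0 x
    have := hg0 x
    positivity
  · have hpos : 0 < ω x + t := by linarith [hω0 x]
    dsimp only
    rw [mul_div_assoc', div_le_iff₀ hpos]
    nlinarith [hg0 x, hω0 x]

theorem exists_le_setIntegral_sublevel (hg : Integrable g μ) (hω : Measurable ω) {b : ℝ}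
    (hb : b < ∫ x, g x ∂μ) : ∃ M : ℕ, b ≤ ∫ x in ω ⁻¹' Set.Iic M, g x ∂μ := by
  have hmono : Monotone fun n : ℕ => ω ⁻¹' Set.Iic n := fun m n hmn =>
    Set.preimage_mono (Set.Iic_subset_Iic.2 (by exact_mod_cast hmn))
  have hunion : ⋃ n : ℕ, ω ⁻¹' Set.Iic n = Set.univ :=
    Set.eq_univ_of_forall fun x => Set.mem_iUnion.2 ⟨⌈ω x⌉₊, show ω x ≤ _ from Nat.le_ceil _⟩
  have hlim := tendsto_setIntegral_of_monotone (fun n => hω measurableSet_Iic) hmono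
    hg.integrableOn
  rw [hunion, setIntegral_univ] at hlim
  exact (hlim.eventually (eventually_ge_nhds hb)).exists

theorem exists_le_mul_integral_div_add (hg0 : ∀ x, 0 ≤ g x) (hg : Integrable g μ)
    (hω : Measurable ω) (hω0 : ∀ x, 0 ≤ ω x) {b : ℝ} (hb : b < ∫ x, g x ∂μ) :
    ∃ M : ℕ, ∀ t > 0, b ≤ (M + t) * ∫ x, g x / (ω x + t) ∂μ := by
  obtain ⟨M, hM⟩ := exists_le_setIntegral_sublevel hg hω hb
  refine ⟨M, fun t ht => hM.trans ?_⟩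
  have hint := (integrable_div_add hg hω hω0 ht).const_mul ((M : ℝ) + t)
  rw [← integral_const_mul]
  calc ∫ x in ω ⁻¹' Set.Iic M, g x ∂μ
      ≤ ∫ x in ω ⁻¹' Set.Iic M, (M + t) * (g x / (ω x + t)) ∂μ := by
        refine setIntegral_mono_on hg.integrableOn hint.integrableOn (hω measurableSet_Iic)
          fun x hx => ?_
        have hpos : 0 < ω x + t := by linarith [hω0 x]
        rw [mul_div_assoc', le_div_iff₀ hpos]
        nlinarith [mul_le_mul_of_nonneg_left (show ω x ≤ M from hx) (hg0 x)]
    _ ≤ ∫ x, (M + t) * (g x / (ω x + t)) ∂μ := by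
        refine setIntegral_le_integral hint (Eventually.of_forall fun x => ?_)
        have := hω0 x
        have := hg0 x
        positivity

end ResolventIntegral

/-- Large-coupling asymptotics of the bottom of the essential spectrum:
E(α) = -‖λ‖·α + o(α) as α → +∞. -/
theorem E_alpha_asymptotics {d : ℕ} (ε σ : ℝ) (hε : 0 < ε) (hσ : σ = 1 ∨ σ = -1)
    (lam : (Fin d → ℝ) → ℂ) (hlam : MemLp lam 2 volume)
    (hlamnorm : 0 < ∫ q, ‖lam q‖ ^ 2)
    (ω : (Fin d → ℝ) → ℝ) (hω : Measurable ω) (hω0 : ∀ k, 0 ≤ ω k)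
    (E : ℝ → ℝ)
    (hE : ∀ᶠ α in atTop, E α < σ * ε ∧
      -σ * ε - E α - α ^ 2 * ∫ q, ‖lam q‖ ^ 2 / (ω q + σ * ε - E α) = 0) :
    (fun α => E α + Real.sqrt (∫ q, ‖lam q‖ ^ 2) * α) =o[atTop] (fun α : ℝ => α) := by
  have hg : Integrable (fun q => ‖lam q‖ ^ 2) volume := hlam.integrable_norm_pow two_ne_zero
  have hg0 : ∀ q, 0 ≤ ‖lam q‖ ^ 2 := fun q => sq_nonneg _
  have hσε : |σ * ε| ≤ ε := by rcases hσ with rfl | rfl <;> simp [abs_of_pos hε]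
  set L := ∫ q, ‖lam q‖ ^ 2
  set s := Real.sqrt L
  refine isLittleO_atTop_id_of_forall_norm_le fun δ hδ => ?_
  set b := max (s - δ) 0
  have hb0 : 0 ≤ b := le_max_right _ _
  have hbs : b < s := max_lt (by linarith) (Real.sqrt_pos.2 hlamnorm)
  obtain ⟨M, hM⟩ := exists_le_mul_integral_div_add hg0 hg hω hω0 ((Real.lt_sqrt hb0).1 hbs)
  refine ⟨M + 3 * ε, ?_⟩
  filter_upwards [hE, eventually_ge_atTop 0] with α ⟨hEα, hroot⟩ hα
  simp_rw [add_sub_assoc] at hroot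
  set t := σ * ε - E α with ht_def
  set I := ∫ q, ‖lam q‖ ^ 2 / (ω q + t)
  have ht : 0 < t := sub_pos.2 hEα
  have heq : t - 2 * (σ * ε) = α ^ 2 * I := by linear_combination hroot + ht_def
  have ht_upper : t - σ * ε ≤ s * α + ε := by
    refine sub_le_add_of_mul_sub_two_mul_le hσε (by positivity) ?_
    calc t * (t - 2 * (σ * ε)) = α ^ 2 * (t * I) := by rw [heq]; ring
      _ ≤ α ^ 2 * L :=
        mul_le_mul_of_nonneg_left (mul_integral_div_add_le hg0 hg hω0 ht) (sq_nonneg α)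
      _ = (s * α) ^ 2 := by rw [mul_pow, Real.sq_sqrt hlamnorm.le]; ring
  have ht_lower : b * α ≤ t + M + 2 * ε := by
    refine le_add_add_of_sq_le_mul hσε ht.le M.cast_nonneg ?_
    calc (b * α) ^ 2 = α ^ 2 * b ^ 2 := by ring
      _ ≤ α ^ 2 * ((M + t) * I) := mul_le_mul_of_nonneg_left (hM t ht) (sq_nonneg α)
      _ = (t - 2 * (σ * ε)) * (M + t) := by rw [heq]; ring
  have hgap : (s - b) * α ≤ δ * α :=
    mul_le_mul_of_nonneg_right (by linarith [le_max_left (s - δ) 0]) hα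
  obtain ⟨hσε₁, hσε₂⟩ := abs_le.1 hσε
  rw [Real.norm_eq_abs, abs_le]
  constructor <;> linarith [M.cast_nonneg (α := ℝ), mul_nonneg hδ.le hα]
end

section
/- Let λ ∈ L²(ℝᵈ) with ‖λ‖ > 0, ω : ℝᵈ → [0,∞) measurable, ε > 0, σ ∈ {±1}. For large α > 0 let E = E(α) < σε be the unique zero of Φ_α(z) = -σε - z - α²∫|λ(q)|²/(ω(q)+σε-z)dq, and set c = σε - E > 0. Let Δ be the multiplication operator by Δ(k) = ω(k) - σε - E - α²∫|λ(q)|²/(ω(k)+ω(q)+σε-E)dq on L²(ℝᵈ), and let K₂ be the integral operator with kernel conj(λ(k₁))λ(k₂)·Ψ₂(k₁,k₂), where Ψ₂(k₁,k₂) = 1/(ω(k₁)+ω(k₂)+c) - 1/(ω(k₁)+c) - 1/(ω(k₂)+c) + 1/c. Then for all sufficiently large α, Δ - α²K₂ ≥ 0 in the sense of quadratic forms on {ψ ∈ L² : ∫ω|ψ|² < ∞}. -/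
/-!
Since `Φ_α(E) = 0`, the multiplication operator satisfies `Δ(k) ≥ ω(k)` pointwise. On the other
side `|Ψ₂(k₁, k₂)| ≤ √(ω k₁ ω k₂) / (2c²)`, and AM–GM pairing `λ(k₁)ψ(k₂)` with `λ(k₂)ψ(k₁)` gives
`|⟨K₂ψ, ψ⟩| ≤ ‖λ‖² ∫ ω|ψ|² / (2c²)`. It remains to show `α²‖λ‖² ≤ 2c²` for large `α`: the equation
for `E` reads `α² ∫ |λ|² / (ω + c) = c - 2σε`, and restricting to a sublevel set `{ω ≤ M}` carrying
three quarters of `‖λ‖²` shows that `c` grows like `α‖λ‖`.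
-/

open MeasureTheory Filter Complex

noncomputable def psi₂ (c x y : ℝ) : ℝ := 1 / (x + y + c) - 1 / (x + c) - 1 / (y + c) + 1 / c

lemma psi₂_eq_div {c x y : ℝ} (hc : 0 < c) (hx : 0 ≤ x) (hy : 0 ≤ y) :
    psi₂ c x y = x * y * (x + y + 2 * c) / (c * (x + c) * (y + c) * (x + y + c)) := by
  unfold psi₂
  field_simp
  ring

lemma abs_psi₂_le {c x y : ℝ} (hc : 0 < c) (hx : 0 ≤ x) (hy : 0 ≤ y) :
    |psi₂ c x y| ≤ √x * √y / (2 * c ^ 2) := by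
  rw [psi₂_eq_div hc hx hy, abs_of_nonneg (by positivity),
    div_le_div_iff₀ (by positivity) (by positivity)]
  -- `(x + c)(y + c) - 4c√(xy) = (√(xy) - c)² + c(√x - √y)²`
  have hamgm : 4 * c * (√x * √y) ≤ (x + c) * (y + c) := by
    nlinarith [Real.sq_sqrt hx, Real.sq_sqrt hy, sq_nonneg (√x * √y - c), sq_nonneg (√x - √y)]
  have hxy : x * y = (√x * √y) ^ 2 := by rw [mul_pow, Real.sq_sqrt hx, Real.sq_sqrt hy]
  rw [hxy]
  calc (√x * √y) ^ 2 * (x + y + 2 * c) * (2 * c ^ 2)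
      ≤ (√x * √y) ^ 2 * (2 * (x + y + c)) * (2 * c ^ 2) := by gcongr; linarith
    _ = √x * √y * c * (4 * c * (√x * √y)) * (x + y + c) := by ring
    _ ≤ √x * √y * c * ((x + c) * (y + c)) * (x + y + c) := by gcongr
    _ = √x * √y * (c * (x + c) * (y + c) * (x + y + c)) := by ring

lemma abs_psi₂_mul_le {c x y : ℝ} (hc : 0 < c) (hx : 0 ≤ x) (hy : 0 ≤ y) {a b : ℝ}
    (ha : 0 ≤ a) (hb : 0 ≤ b) :
    |psi₂ c x y| * (a * b) ≤ (a ^ 2 * y + b ^ 2 * x) / (4 * c ^ 2) := by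
  have hamgm : 2 * (a * √y) * (b * √x) ≤ a ^ 2 * y + b ^ 2 * x := by
    nlinarith [Real.sq_sqrt hx, Real.sq_sqrt hy, sq_nonneg (a * √y - b * √x)]
  calc |psi₂ c x y| * (a * b) ≤ √x * √y / (2 * c ^ 2) * (a * b) := by
        gcongr; exact abs_psi₂_le hc hx hy
    _ = 2 * (a * √y) * (b * √x) / (4 * c ^ 2) := by field_simp; ring
    _ ≤ (a ^ 2 * y + b ^ 2 * x) / (4 * c ^ 2) := by gcongr

lemma le_two_mul_sq_of_le_mul {t a b c : ℝ} (h : 3 / 4 * t ≤ (c + a) * (c + b))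
    (ht : 8 * ((a + b) ^ 2 + a * b) ≤ t) : t ≤ 2 * c ^ 2 := by
  -- `(a + b) c ≤ c² / 4 + (a + b)²`
  nlinarith [sq_nonneg (c / 2 - (a + b))]

section

variable {X : Type*} [MeasurableSpace X] {μ : Measure X}

lemma norm_integral_integral_le_of_norm_le_symm {E : Type*} [NormedAddCommGroup E]
    [NormedSpace ℝ E] {h : X → X → E} {f g : X → ℝ} {C : ℝ} (hf : Integrable f μ)
    (hg : Integrable g μ) (hb : ∀ x y, ‖h x y‖ ≤ C * (f x * g y + g x * f y)) :
    ‖∫ x, ∫ y, h x y ∂μ ∂μ‖ ≤ 2 * C * ((∫ x, f x ∂μ) * ∫ x, g x ∂μ) := by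
  have hinner : ∀ x, ‖∫ y, h x y ∂μ‖ ≤ C * (f x * ∫ y, g y ∂μ + g x * ∫ y, f y ∂μ) := by
    intro x
    refine (norm_integral_le_of_norm_le (g := fun y => C * (f x * g y + g x * f y))
      (((hg.const_mul _).add (hf.const_mul _)).const_mul C)
      (Eventually.of_forall (hb x))).trans_eq ?_
    rw [integral_const_mul, integral_add (hg.const_mul _) (hf.const_mul _), integral_const_mul,
      integral_const_mul]
  refine (norm_integral_le_of_norm_le
    (g := fun x => C * (f x * ∫ y, g y ∂μ + g x * ∫ y, f y ∂μ))
    (((hf.mul_const _).add (hg.mul_const _)).const_mul C) (Eventually.of_forall hinner)).trans_eq ?_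
  rw [integral_const_mul, integral_add (hf.mul_const _) (hg.mul_const _), integral_mul_const,
    integral_mul_const]
  ring

lemma MeasureTheory.Integrable.div_of_le {f g : X → ℝ} {c : ℝ} (hf : Integrable f μ)
    (hg : AEStronglyMeasurable g μ) (hc : 0 < c) (hgc : ∀ x, c ≤ g x) :
    Integrable (fun x => f x / g x) μ := by
  simp only [div_eq_inv_mul]
  refine hf.bdd_mul (c := c⁻¹) hg.aemeasurable.inv.aestronglyMeasurable
    (Eventually.of_forall fun x => ?_)
  rw [norm_inv, Real.norm_of_nonneg (hc.trans_le (hgc x)).le]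
  exact inv_anti₀ hc (hgc x)

lemma exists_lt_setIntegral_setOf_le {f ω : X → ℝ} (hf : Integrable f μ) (hω : Measurable ω)
    {θ : ℝ} (hθ : θ < ∫ x, f x ∂μ) : ∃ M : ℕ, θ < ∫ x in {x | ω x ≤ M}, f x ∂μ := by
  have hunion : (⋃ n : ℕ, {x | ω x ≤ n}) = Set.univ :=
    Set.eq_univ_of_forall fun x => Set.mem_iUnion.2 ⟨⌈ω x⌉₊, show ω x ≤ _ from Nat.le_ceil _⟩
  have hlim := tendsto_setIntegral_of_monotone (μ := μ) (f := f)
    (fun n : ℕ => measurableSet_le hω measurable_const)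
    (fun m n hmn x (hx : ω x ≤ m) => hx.trans (Nat.cast_le.2 hmn)) (hunion ▸ hf.integrableOn)
  rw [hunion, Measure.restrict_univ] at hlim
  exact (hlim.eventually (eventually_gt_nhds hθ)).exists

lemma setIntegral_setOf_le_le_mul_integral_div {f ω : X → ℝ} (hf : Integrable f μ)
    (hf0 : ∀ x, 0 ≤ f x) (hω : Measurable ω) (hω0 : ∀ x, 0 ≤ ω x) {c M : ℝ} (hc : 0 < c)
    (hM : 0 ≤ M) :
    ∫ x in {x | ω x ≤ M}, f x ∂μ ≤ (M + c) * ∫ x, f x / (ω x + c) ∂μ := by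
  have hdiv : Integrable (fun x => f x / (ω x + c)) μ :=
    hf.div_of_le (hω.add_const c).aestronglyMeasurable hc fun x => by linarith [hω0 x]
  rw [← integral_const_mul]
  calc ∫ x in {x | ω x ≤ M}, f x ∂μ
      ≤ ∫ x in {x | ω x ≤ M}, (M + c) * (f x / (ω x + c)) ∂μ := by
        refine setIntegral_mono_on hf.integrableOn (hdiv.const_mul _).integrableOn
          (measurableSet_le hω measurable_const) fun x (hx : ω x ≤ M) => ?_
        have hωc : 0 < ω x + c := by linarith [hω0 x]
        rw [mul_div_assoc', le_div_iff₀ hωc]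
        exact (mul_le_mul_of_nonneg_left (by linarith) (hf0 x)).trans_eq (mul_comm _ _)
    _ ≤ ∫ x, (M + c) * (f x / (ω x + c)) ∂μ :=
        setIntegral_le_integral (hdiv.const_mul _)
          (Eventually.of_forall fun x => by have := hω0 x; have := hf0 x; positivity)

lemma sq_mul_integral_le_two_mul_sq {f ω : X → ℝ} (hf : Integrable f μ) (hf0 : ∀ x, 0 ≤ f x)
    (hω : Measurable ω) (hω0 : ∀ x, 0 ≤ ω x) {M : ℝ} (hM0 : 0 ≤ M)
    (hM : 3 / 4 * ∫ x, f x ∂μ ≤ ∫ x in {x | ω x ≤ M}, f x ∂μ) {α a c : ℝ} (hc : 0 < c)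
    (hI : α ^ 2 * ∫ x, f x / (ω x + c) ∂μ ≤ c + a)
    (hα : 8 * ((a + M) ^ 2 + a * M) ≤ α ^ 2 * ∫ x, f x ∂μ) :
    α ^ 2 * ∫ x, f x ∂μ ≤ 2 * c ^ 2 := by
  have hmass := hM.trans (setIntegral_setOf_le_le_mul_integral_div (μ := μ) hf hf0 hω hω0 hc hM0)
  refine le_two_mul_sq_of_le_mul ?_ hα
  nlinarith [mul_le_mul_of_nonneg_left hmass (sq_nonneg α), mul_le_mul_of_nonneg_left hI
    (by linarith : 0 ≤ M + c)]

lemma aestronglyMeasurable_integral_div_add_add [SFinite μ] {f ω : X → ℝ}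
    (hf : AEStronglyMeasurable f μ) (hω : Measurable ω) (c : ℝ) :
    AEStronglyMeasurable (fun x => ∫ y, f y / (ω x + ω y + c) ∂μ) μ :=
  (hf.comp_snd.mul (((hω.comp measurable_fst).add (hω.comp measurable_snd)).add_const
    c).inv.aestronglyMeasurable).integral_prod_right'

lemma integral_div_add_add_le {f ω : X → ℝ} {c : ℝ}
    (hf : Integrable (fun y => f y / (ω y + c)) μ) (hf0 : ∀ y, 0 ≤ f y) (hω0 : ∀ y, 0 ≤ ω y)
    (hc : 0 < c) (x : X) :
    ∫ y, f y / (ω x + ω y + c) ∂μ ≤ ∫ y, f y / (ω y + c) ∂μ := by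
  refine integral_mono_of_nonneg (Eventually.of_forall fun y => ?_) hf
    (Eventually.of_forall fun y => ?_)
  · have := hω0 x; have := hω0 y; have := hf0 y; positivity
  · exact div_le_div_of_nonneg_left (hf0 y) (by linarith [hω0 y]) (by linarith [hω0 x])

lemma integral_mul_le_integral_mul_of_le {ω D φ : X → ℝ} {b : ℝ}
    (hD : AEStronglyMeasurable D μ) (hωD : ∀ x, ω x ≤ D x) (hDb : ∀ x, D x ≤ ω x + b)
    (hω0 : ∀ x, 0 ≤ ω x) (hφ0 : ∀ x, 0 ≤ φ x) (hφ : Integrable φ μ)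
    (hωφ : Integrable (fun x => ω x * φ x) μ) :
    ∫ x, ω x * φ x ∂μ ≤ ∫ x, D x * φ x ∂μ := by
  have hDφ : Integrable (fun x => D x * φ x) μ := by
    refine (hωφ.add (hφ.const_mul |b|)).mono' (hD.mul hφ.1) (Eventually.of_forall fun x => ?_)
    rw [Real.norm_of_nonneg (mul_nonneg ((hω0 x).trans (hωD x)) (hφ0 x))]
    simp only [Pi.add_apply]
    nlinarith [hDb x, hφ0 x, le_abs_self b]
  exact integral_mono hωφ hDφ fun x => mul_le_mul_of_nonneg_right (hωD x) (hφ0 x)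

lemma integral_mul_le_integral_delta_mul [SFinite μ] {f ω φ : X → ℝ} {a β c : ℝ}
    (hf : Integrable f μ) (hf0 : ∀ y, 0 ≤ f y) (hω : Measurable ω) (hω0 : ∀ y, 0 ≤ ω y)
    (hc : 0 < c) (hβ : 0 ≤ β) (hI : β * ∫ y, f y / (ω y + c) ∂μ = a)
    (hφ0 : ∀ x, 0 ≤ φ x) (hφ : Integrable φ μ) (hωφ : Integrable (fun x => ω x * φ x) μ) :
    ∫ x, ω x * φ x ∂μ ≤
      ∫ x, (ω x + a - β * ∫ y, f y / (ω x + ω y + c) ∂μ) * φ x ∂μ := by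
  have hdiv : Integrable (fun y => f y / (ω y + c)) μ :=
    hf.div_of_le (hω.add_const c).aestronglyMeasurable hc fun y => by linarith [hω0 y]
  refine integral_mul_le_integral_mul_of_le (b := a)
    (((hω.aestronglyMeasurable.add aestronglyMeasurable_const).sub
      ((aestronglyMeasurable_integral_div_add_add hf.1 hω c).const_mul β))) (fun x => ?_)
    (fun x => ?_) hω0 hφ0 hφ hωφ
  · nlinarith [mul_le_mul_of_nonneg_left (integral_div_add_add_le hdiv hf0 hω0 hc x) hβ]
  · have : 0 ≤ ∫ y, f y / (ω x + ω y + c) ∂μ := integral_nonneg fun y => by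
      have := hω0 x; have := hω0 y; have := hf0 y; positivity
    nlinarith [mul_nonneg hβ this]

lemma norm_integral_integral_psi₂_le {lam ψ : X → ℂ} {ω : X → ℝ} {c : ℝ}
    (hlam : Integrable (fun x => ‖lam x‖ ^ 2) μ) (hψω : Integrable (fun x => ω x * ‖ψ x‖ ^ 2) μ)
    (hω0 : ∀ x, 0 ≤ ω x) (hc : 0 < c) :
    ‖∫ x, ∫ y, (starRingEnd ℂ) (lam x) * lam y * (psi₂ c (ω x) (ω y) : ℂ) * ψ y *
        (starRingEnd ℂ) (ψ x) ∂μ ∂μ‖ ≤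
      (∫ x, ‖lam x‖ ^ 2 ∂μ) * (∫ x, ω x * ‖ψ x‖ ^ 2 ∂μ) / (2 * c ^ 2) := by
  refine (norm_integral_integral_le_of_norm_le_symm (C := 1 / (4 * c ^ 2)) hlam hψω
    fun x y => ?_).trans_eq (by field_simp; ring)
  have hb := abs_psi₂_mul_le hc (hω0 x) (hω0 y)
    (mul_nonneg (norm_nonneg (lam x)) (norm_nonneg (ψ y)))
    (mul_nonneg (norm_nonneg (lam y)) (norm_nonneg (ψ x)))
  simp only [norm_mul, RCLike.norm_conj, Complex.norm_real, Real.norm_eq_abs]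
  convert hb using 1 <;> ring

end

/-- For all sufficiently large coupling, Δ - α²K₂ ≥ 0 in the sense of quadratic forms. -/
theorem Delta_minus_K2_nonneg {d : ℕ} (ε σ : ℝ) (hε : 0 < ε) (hσ : σ = 1 ∨ σ = -1)
    (lam : (Fin d → ℝ) → ℂ) (hlam : MemLp lam 2 volume)
    (hlamnorm : 0 < ∫ q, ‖lam q‖ ^ 2)
    (ω : (Fin d → ℝ) → ℝ) (hω : Measurable ω) (hω0 : ∀ k, 0 ≤ ω k)
    (E : ℝ → ℝ)
    (hE : ∀ᶠ α in atTop, E α < σ * ε ∧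
      -σ * ε - E α - α ^ 2 * ∫ q, ‖lam q‖ ^ 2 / (ω q + σ * ε - E α) = 0) :
    ∀ᶠ α in atTop, ∀ ψ : (Fin d → ℝ) → ℂ, MemLp ψ 2 volume →
      Integrable (fun k => ω k * ‖ψ k‖ ^ 2) volume →
      α ^ 2 * (∫ k₁, ∫ k₂, (starRingEnd ℂ) (lam k₁) * lam k₂ *
            (((1 / (ω k₁ + ω k₂ + (σ * ε - E α)) - 1 / (ω k₁ + (σ * ε - E α))
              - 1 / (ω k₂ + (σ * ε - E α)) + 1 / (σ * ε - E α) : ℝ)) : ℂ) *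
            ψ k₂ * (starRingEnd ℂ) (ψ k₁)).re
        ≤ ∫ k, (ω k - σ * ε - E α
            - α ^ 2 * ∫ q, ‖lam q‖ ^ 2 / (ω k + ω q + σ * ε - E α)) * ‖ψ k‖ ^ 2 := by
  have hlam2 : Integrable (fun q => ‖lam q‖ ^ 2) volume :=
    (memLp_two_iff_integrable_sq_norm hlam.aestronglyMeasurable).1 hlam
  set L := ∫ q, ‖lam q‖ ^ 2
  obtain ⟨M, hM⟩ := exists_lt_setIntegral_setOf_le hlam2 hω (by linarith : 3 / 4 * L < L)
  have hlarge : ∀ᶠ α : ℝ in atTop, 8 * ((2 * ε + M) ^ 2 + 2 * ε * M) ≤ α ^ 2 * L :=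
    ((tendsto_pow_atTop two_ne_zero).atTop_mul_const hlamnorm).eventually_ge_atTop _
  filter_upwards [hE, hlarge] with α ⟨hEσ, hEq⟩ hα ψ hψ hψω
  simp only [add_sub_assoc] at hEq ⊢
  set c := σ * ε - E α
  have hc : 0 < c := sub_pos.2 hEσ
  set I := ∫ q, ‖lam q‖ ^ 2 / (ω q + c)
  have hI : α ^ 2 * I = -σ * ε - E α := by linarith
  have hσε : -σ * ε - E α ≤ c + 2 * ε := by rcases hσ with rfl | rfl <;> linarith
  have hcoupling : α ^ 2 * L ≤ 2 * c ^ 2 :=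
    sq_mul_integral_le_two_mul_sq hlam2 (fun q => sq_nonneg _) hω hω0 M.cast_nonneg hM.le hc
      (hI.trans_le hσε) hα
  refine le_trans (mul_le_mul_of_nonneg_left (re_le_norm _) (sq_nonneg α)) ?_
  refine le_trans (mul_le_mul_of_nonneg_left
    (norm_integral_integral_psi₂_le hlam2 hψω hω0 hc) (sq_nonneg α)) ?_
  have hW : 0 ≤ ∫ k, ω k * ‖ψ k‖ ^ 2 := integral_nonneg fun k => by have := hω0 k; positivity
  calc α ^ 2 * (L * (∫ k, ω k * ‖ψ k‖ ^ 2) / (2 * c ^ 2))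
      ≤ ∫ k, ω k * ‖ψ k‖ ^ 2 := by
        rw [← mul_div_assoc, div_le_iff₀ (by positivity)]
        nlinarith [mul_le_mul_of_nonneg_right hcoupling hW]
    _ ≤ ∫ k, (ω k + (-σ * ε - E α) - α ^ 2 * ∫ q, ‖lam q‖ ^ 2 / (ω k + ω q + c)) * ‖ψ k‖ ^ 2 :=
        integral_mul_le_integral_delta_mul hlam2 (fun q => sq_nonneg _) hω hω0 hc (sq_nonneg α) hI
          (fun k => sq_nonneg _) ((memLp_two_iff_integrable_sq_norm hψ.1).1 hψ) hψω
    _ = _ := by congr 1; ext k; ring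
end

section
/- Let ψ : [0, δ₀) × [1/2, ∞) → ℝ be continuous, strictly increasing in the second variable, with ψ(0, 1) = 0 and ∂ψ/∂y(0,1) existing, positive, and ψ continuous at (0,1). Then there exist δ ∈ (0, δ₀] and a unique continuous function Ê : [0, δ) → ℝ with Ê(0) = 1 and ψ(β, Ê(β)) = 0 for all β ∈ [0, δ). -/
/-!
Strict monotonicity in `y` turns `ψ 0 1 = 0` into the sign change `ψ 0 (3/4) < 0 < ψ 0 (5/4)`,
which by continuity in `β` persists for `β ∈ [0, δ)`. The intermediate value theorem gives a zero
`Ê β ∈ [3/4, 5/4]`, unique by monotonicity. Continuity of `Ê` at `β₀` comes from the same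
mechanism: for `y₁ < Ê β₀ < y₂` the strict signs `ψ β₀ y₁ < 0 < ψ β₀ y₂` persist near `β₀` and
trap `Ê β` between `y₁` and `y₂`.
-/

open Set Function Filter Topology

section ImplicitZero

variable {X : Type*} {s : Set X} {t : Set ℝ} {ψ : X → ℝ → ℝ} {f : X → ℝ}

theorem exists_mapsTo_Icc_map_eq_zero {a b : ℝ} (hab : a ≤ b)
    (hψ : ∀ x ∈ s, ContinuousOn (ψ x) (Icc a b)) (hsign : ∀ x ∈ s, ψ x a ≤ 0 ∧ 0 ≤ ψ x b) :
    ∃ f : X → ℝ, ∀ x ∈ s, f x ∈ Icc a b ∧ ψ x (f x) = 0 := by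
  choose! f hf using fun x hx => intermediate_value_Icc hab (hψ x hx) (hsign x hx)
  exact ⟨f, hf⟩

variable [TopologicalSpace X] {x₀ : X} {y : ℝ}

theorem eventually_gt_of_map_eq_zero (hmono : ∀ x ∈ s, StrictMonoOn (ψ x) t)
    (hf : ∀ x ∈ s, f x ∈ t ∧ ψ x (f x) = 0) (hx₀ : x₀ ∈ s) (hy : y ∈ t)
    (hψ : ContinuousWithinAt (fun x => ψ x y) s x₀) (hlt : y < f x₀) :
    ∀ᶠ x in 𝓝[s] x₀, y < f x := by
  have hneg : ψ x₀ y < 0 := (hf x₀ hx₀).2 ▸ hmono x₀ hx₀ hy (hf x₀ hx₀).1 hlt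
  filter_upwards [hψ.eventually_lt_const hneg, self_mem_nhdsWithin] with x hx hxs
  rw [← (hf x hxs).2] at hx
  exact ((hmono x hxs).lt_iff_lt hy (hf x hxs).1).1 hx

theorem eventually_lt_of_map_eq_zero (hmono : ∀ x ∈ s, StrictMonoOn (ψ x) t)
    (hf : ∀ x ∈ s, f x ∈ t ∧ ψ x (f x) = 0) (hx₀ : x₀ ∈ s) (hy : y ∈ t)
    (hψ : ContinuousWithinAt (fun x => ψ x y) s x₀) (hlt : f x₀ < y) :
    ∀ᶠ x in 𝓝[s] x₀, f x < y := by
  have hpos : 0 < ψ x₀ y := (hf x₀ hx₀).2 ▸ hmono x₀ hx₀ (hf x₀ hx₀).1 hy hlt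
  filter_upwards [hψ.eventually_const_lt hpos, self_mem_nhdsWithin] with x hx hxs
  rw [← (hf x hxs).2] at hx
  exact ((hmono x hxs).lt_iff_lt (hf x hxs).1 hy).1 hx

theorem continuousOn_of_map_eq_zero (hmono : ∀ x ∈ s, StrictMonoOn (ψ x) t)
    (hf : ∀ x ∈ s, f x ∈ t ∧ ψ x (f x) = 0) (hψ : ∀ y ∈ t, ContinuousOn (fun x => ψ x y) s)
    (hint : ∀ x ∈ s, f x ∈ interior t) : ContinuousOn f s := by
  intro x₀ hx₀
  have ht : t ∈ 𝓝 (f x₀) := mem_interior_iff_mem_nhds.1 (hint x₀ hx₀)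
  refine tendsto_order.2 ⟨fun a ha => ?_, fun b hb => ?_⟩
  · obtain ⟨y, hyt, hay, hyf⟩ :=
      Filter.nonempty_of_mem (inter_mem (nhdsWithin_le_nhds ht) (Ioo_mem_nhdsLT ha))
    exact (eventually_gt_of_map_eq_zero hmono hf hx₀ hyt (hψ y hyt x₀ hx₀) hyf).mono
      fun x hx => hay.trans hx
  · obtain ⟨y, hyt, hfy, hyb⟩ :=
      Filter.nonempty_of_mem (inter_mem (nhdsWithin_le_nhds ht) (Ioo_mem_nhdsGT hb))
    exact (eventually_lt_of_map_eq_zero hmono hf hx₀ hyt (hψ y hyt x₀ hx₀) hfy).mono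
      fun x hx => hx.trans hyb

end ImplicitZero

theorem one_sided_implicit_function_general (δ₀ : ℝ) (hδ₀ : 0 < δ₀)
    (ψ : ℝ → ℝ → ℝ)
    (hcont : ContinuousOn (uncurry ψ) (Ico (0 : ℝ) δ₀ ×ˢ Ici (1 / 2 : ℝ)))
    (hmono : ∀ x ∈ Ico (0 : ℝ) δ₀, StrictMonoOn (ψ x) (Ici (1 / 2 : ℝ)))
    (hzero : ψ 0 1 = 0) :
    ∃ δ : ℝ, 0 < δ ∧ δ ≤ δ₀ ∧
      ∃ Ehat : ℝ → ℝ,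
        ContinuousOn Ehat (Ico (0 : ℝ) δ) ∧ Ehat 0 = 1 ∧
        (∀ β ∈ Ico (0 : ℝ) δ, Ehat β ∈ Ici (1 / 2 : ℝ) ∧ ψ β (Ehat β) = 0) ∧
        ∀ g : ℝ → ℝ, ContinuousOn g (Ico (0 : ℝ) δ) → g 0 = 1 →
          (∀ β ∈ Ico (0 : ℝ) δ, g β ∈ Ici (1 / 2 : ℝ) ∧ ψ β (g β) = 0) →
          ∀ β ∈ Ico (0 : ℝ) δ, g β = Ehat β := by
  have h0 : (0 : ℝ) ∈ Ico 0 δ₀ := ⟨le_rfl, hδ₀⟩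
  have hsign₀ : ψ 0 (3 / 4) < 0 ∧ 0 < ψ 0 (5 / 4) :=
    ⟨(hmono 0 h0 (by norm_num) (by norm_num) (by norm_num : (3 / 4 : ℝ) < 1)).trans_eq hzero,
      hzero.symm.trans_lt (hmono 0 h0 (by norm_num) (by norm_num) (by norm_num : (1 : ℝ) < 5 / 4))⟩
  have hsign : ∀ᶠ β in 𝓝[≥] 0, ψ β (3 / 4) < 0 ∧ 0 < ψ β (5 / 4) := by
    rw [← nhdsWithin_Ico_eq_nhdsGE hδ₀]
    exact ((hcont.uncurry_right _ (by norm_num) 0 h0).eventually_lt_const hsign₀.1).and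
      ((hcont.uncurry_right _ (by norm_num) 0 h0).eventually_const_lt hsign₀.2)
  obtain ⟨δ, ⟨hδ, hδδ₀⟩, hδsign⟩ := (mem_nhdsGE_iff_exists_mem_Ioc_Ico_subset hδ₀).1 hsign
  have hsub : Ico 0 δ ⊆ Ico 0 δ₀ := Ico_subset_Ico_right hδδ₀
  have hIcc : Icc (3 / 4 : ℝ) (5 / 4) ⊆ Ioi (1 / 2) := fun y hy => lt_of_lt_of_le (by norm_num) hy.1
  obtain ⟨E, hE⟩ := exists_mapsTo_Icc_map_eq_zero (s := Ico 0 δ) (by norm_num)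
    (fun β hβ => (hcont.uncurry_left β (hsub hβ)).mono (hIcc.trans Ioi_subset_Ici_self))
    fun β hβ => ⟨(hδsign hβ).1.le, (hδsign hβ).2.le⟩
  have hmonoδ : ∀ β ∈ Ico 0 δ, StrictMonoOn (ψ β) (Ici (1 / 2)) := fun β hβ => hmono β (hsub hβ)
  have hEδ : ∀ β ∈ Ico 0 δ, E β ∈ Ici (1 / 2 : ℝ) ∧ ψ β (E β) = 0 :=
    fun β hβ => ⟨Ioi_subset_Ici_self (hIcc (hE β hβ).1), (hE β hβ).2⟩
  refine ⟨δ, hδ, hδδ₀, E, ?_, ?_, hEδ, fun g _ _ hg β hβ => ?_⟩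
  · refine continuousOn_of_map_eq_zero hmonoδ hEδ (fun y hy => (hcont.uncurry_right y hy).mono hsub)
      fun β hβ => ?_
    rw [interior_Ici]
    exact hIcc (hE β hβ).1
  · exact (hmonoδ 0 ⟨le_rfl, hδ⟩).injOn (hEδ 0 ⟨le_rfl, hδ⟩).1 (by norm_num)
      ((hEδ 0 ⟨le_rfl, hδ⟩).2.trans hzero.symm)
  · exact (hmonoδ β hβ).injOn (hg β hβ).1 (hEδ β hβ).1 ((hg β hβ).2.trans (hEδ β hβ).2.symm)

/-- A one-sided implicit function theorem (cf. Kumagai 1980): continuity plus strict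
monotonicity in the second variable yield a unique continuous implicit function. -/
theorem one_sided_implicit_function (δ₀ : ℝ) (hδ₀ : 0 < δ₀)
    (ψ : ℝ → ℝ → ℝ)
    (hcont : ContinuousOn (uncurry ψ) (Ico (0 : ℝ) δ₀ ×ˢ Ici (1 / 2 : ℝ)))
    (hmono : ∀ x ∈ Ico (0 : ℝ) δ₀, StrictMonoOn (ψ x) (Ici (1 / 2 : ℝ)))
    (hzero : ψ 0 1 = 0)
    (deriv : ℝ) (hderiv_pos : 0 < deriv)
    (hderiv : HasDerivWithinAt (fun y => ψ 0 y) deriv (Ici (1 / 2 : ℝ)) 1) :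
    ∃ δ : ℝ, 0 < δ ∧ δ ≤ δ₀ ∧
      ∃ Ehat : ℝ → ℝ,
        ContinuousOn Ehat (Ico (0 : ℝ) δ) ∧ Ehat 0 = 1 ∧
        (∀ β ∈ Ico (0 : ℝ) δ, Ehat β ∈ Ici (1 / 2 : ℝ) ∧ ψ β (Ehat β) = 0) ∧
        ∀ g : ℝ → ℝ, ContinuousOn g (Ico (0 : ℝ) δ) → g 0 = 1 →
          (∀ β ∈ Ico (0 : ℝ) δ, g β ∈ Ici (1 / 2 : ℝ) ∧ ψ β (g β) = 0) →
          ∀ β ∈ Ico (0 : ℝ) δ, g β = Ehat β :=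
  one_sided_implicit_function_general δ₀ hδ₀ ψ hcont hmono hzero
end
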